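/- arXiv:1507.01770 — 3 statements merged into one kernel-verified Lean document; each statement's English description precedes it below -/
import Mathlib

section
/- Let A, B : ℝ → Mₙ(ℂ) be differentiable families of Hermitian idempotent matrices, let F(x) = diag(A(x), B(x)), let X(t) = [[cos(t)·Iₙ, sin(t)·Iₙ], [−sin(t)·Iₙ, cos(t)·Iₙ]], and set S(t,x) = X(t)·F(x)·X(t)⁻¹. Then for every k ≥ 0 and all (t,x): Tr( (I₂ₙ − 2·S(t,x)) · (∂S/∂t)(t,x) · ((∂S/∂x)(t,x))^{2k+1} ) = 0. -/
open Matrix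

/-- The rotation block matrix family `X(t) = [[cos t • 1, sin t • 1], [-sin t • 1, cos t • 1]]`. -/
noncomputable def rotBlock (n : ℕ) (t : ℝ) :
    Matrix (Fin n ⊕ Fin n) (Fin n ⊕ Fin n) ℂ :=
  Matrix.fromBlocks ((Real.cos t : ℂ) • 1) ((Real.sin t : ℂ) • 1)
    ((-(Real.sin t : ℝ) : ℂ) • 1) ((Real.cos t : ℂ) • 1)

/-! Write `X(t) = cos t • 1 - sin t • J` with `J` the standard symplectic matrix, so that
`X' = -J X` and `∂ₜS = S J - J S`. Differentiating `S² = S` in `x` shows that `N = ∂ₓS` satisfies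
`S N + N S = N`; then `N²` commutes with `S`, so every odd power `M` of `N` satisfies the same
relation, and a cyclic-trace computation gives `Tr((1 - 2S)(S J - J S) M) = -Tr(J M)`. Finally
`∂ₓS = X (∂ₓF) X⁻¹` with `∂ₓF` block diagonal and `J` commuting with `X`, so
`Tr(J M) = Tr(J (∂ₓF)^(2k+1)) = 0` because `J` is block off-diagonal. -/

section EntrywiseDeriv

variable {𝕜 𝔸 : Type*} [NontriviallyNormedField 𝕜] [NormedRing 𝔸] [NormedAlgebra 𝕜 𝔸]
  {l m p : Type*}

def HasEntrywiseDerivAt (f : 𝕜 → Matrix l m 𝔸) (f' : Matrix l m 𝔸) (t : 𝕜) : Prop :=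
  ∀ i j, HasDerivAt (fun s => f s i j) (f' i j) t

namespace HasEntrywiseDerivAt

variable {f : 𝕜 → Matrix l m 𝔸} {g : 𝕜 → Matrix m p 𝔸} {f' f'' : Matrix l m 𝔸}
  {g' : Matrix m p 𝔸} {t : 𝕜}

theorem unique (hf : HasEntrywiseDerivAt f f' t) (hf' : HasEntrywiseDerivAt f f'' t) :
    f' = f'' :=
  Matrix.ext fun i j => (hf i j).unique (hf' i j)

theorem const (C : Matrix l m 𝔸) (t : 𝕜) : HasEntrywiseDerivAt (fun _ => C) 0 t :=
  fun i j => hasDerivAt_const t (C i j)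

theorem mul [Fintype m] (hf : HasEntrywiseDerivAt f f' t) (hg : HasEntrywiseDerivAt g g' t) :
    HasEntrywiseDerivAt (fun s => f s * g s) (f' * g t + f t * g') t := by
  intro i j
  simp only [mul_apply, Matrix.add_apply, ← Finset.sum_add_distrib]
  exact HasDerivAt.fun_sum fun k _ => (hf i k).fun_mul (hg k j)

theorem const_mul [Fintype l] (C : Matrix p l 𝔸) (hf : HasEntrywiseDerivAt f f' t) :
    HasEntrywiseDerivAt (fun s => C * f s) (C * f') t := by
  simpa using (const C t).mul hf

theorem mul_const [Fintype m] (hf : HasEntrywiseDerivAt f f' t) (C : Matrix m p 𝔸) :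
    HasEntrywiseDerivAt (fun s => f s * C) (f' * C) t := by
  simpa using hf.mul (const C t)

theorem mul_add_mul_eq_of_mul_self {f : 𝕜 → Matrix m m 𝔸} {f' : Matrix m m 𝔸} [Fintype m]
    (hf : HasEntrywiseDerivAt f f' t) (hidem : ∀ s, f s * f s = f s) :
    f t * f' + f' * f t = f' := by
  have hsq := hf.mul hf
  simp only [hidem] at hsq
  rw [add_comm]
  exact hsq.unique hf

theorem exists_eq_fromBlocks_zero_zero {n o : Type*} {A : 𝕜 → Matrix n n 𝔸}
    {B : 𝕜 → Matrix o o 𝔸} {F' : Matrix (n ⊕ o) (n ⊕ o) 𝔸}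
    (h : HasEntrywiseDerivAt (fun s => fromBlocks (A s) 0 0 (B s)) F' t) :
    ∃ A' B', F' = fromBlocks A' 0 0 B' := by
  refine ⟨F'.toBlocks₁₁, F'.toBlocks₂₂, ?_⟩
  ext (i | i) (j | j)
  · rfl
  · exact (h (.inl i) (.inr j)).unique (hasDerivAt_const t 0)
  · exact (h (.inr i) (.inl j)).unique (hasDerivAt_const t 0)
  · rfl

end HasEntrywiseDerivAt

end EntrywiseDeriv

section Ring

variable {R : Type*} [Ring R] {P N : R}

theorem commute_sq_of_mul_add_mul_eq_self (h : P * N + N * P = N) : Commute P (N ^ 2) := by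
  have hPN : P * N = N - N * P := eq_sub_of_add_eq h
  have hNP : N * P = N - P * N := eq_sub_of_add_eq' h
  calc P * N ^ 2 = (N - N * P) * N := by rw [sq, ← mul_assoc, hPN]
    _ = N * (N - P * N) := by noncomm_ring
    _ = N ^ 2 * P := by rw [← hNP, sq, mul_assoc]

theorem mul_pow_odd_add_pow_odd_mul (h : P * N + N * P = N) (k : ℕ) :
    P * N ^ (2 * k + 1) + N ^ (2 * k + 1) * P = N ^ (2 * k + 1) := by
  have hQ : Commute P ((N ^ 2) ^ k) := (commute_sq_of_mul_add_mul_eq_self h).pow_right k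
  rw [pow_succ', pow_mul, mul_assoc N, ← hQ.eq, ← mul_assoc, ← mul_assoc, ← add_mul, h]

end Ring

section Trace

variable {R m : Type*} [CommRing R] [Fintype m] [DecidableEq m] {P K M : Matrix m m R}

theorem trace_one_sub_two_smul_mul_commutator_mul (hP : P * P = P) (hM : P * M + M * P = M) :
    trace ((1 - (2 : R) • P) * (K * P - P * K) * M) = trace (K * M) := by
  have hPM : P * M = M - M * P := eq_sub_of_add_eq hM
  have hPKPM : trace (P * K * P * M) = 0 := by
    rw [mul_assoc (P * K), hPM, mul_sub, trace_sub, ← mul_assoc, trace_mul_comm _ P,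
      ← mul_assoc, ← mul_assoc, hP, sub_self]
  have hKPM : trace (K * P * M) = trace (K * M) - trace (P * K * M) := by
    rw [mul_assoc, hPM, mul_sub, trace_sub, ← mul_assoc, trace_mul_comm (K * M) P, ← mul_assoc]
  have hexpand : (1 - (2 : R) • P) * (K * P - P * K) * M
      = K * P * M + P * K * M - (2 : R) • (P * K * P * M) := by
    calc (1 - (2 : R) • P) * (K * P - P * K) * M
        = K * P * M - P * K * M - (2 : R) • (P * K * P * M) + (2 : R) • (P * P * K * M) := by
          noncomm_ring
      _ = _ := by rw [hP]; module
  rw [hexpand, trace_sub, trace_add, trace_smul, hPKPM, hKPM]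
  ring

theorem trace_mul_units_conj_of_commute {u : (Matrix m m R)ˣ} (hK : Commute K u)
    (M : Matrix m m R) :
    trace (K * ((u : Matrix m m R) * M * (↑u⁻¹ : Matrix m m R))) = trace (K * M) := by
  rw [← mul_assoc, ← mul_assoc, hK.eq, mul_assoc _ K, trace_units_conj]

theorem trace_J_mul_fromBlocks_pow (A B : Matrix m m R) (p : ℕ) :
    trace (J m R * fromBlocks A 0 0 B ^ p) = 0 := by
  simp [fromBlocks_diagonal_pow, J, fromBlocks_multiply, trace, Fintype.sum_sum_type]

end Trace

section Rotation

variable (n : ℕ)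

theorem rotBlock_eq_cos_smul_sub_sin_smul_J (t : ℝ) :
    rotBlock n t = (Real.cos t : ℂ) • 1 - (Real.sin t : ℂ) • J (Fin n) ℂ := by
  ext (i | i) (j | j) <;> simp [rotBlock, J, one_apply]

theorem rotBlock_zero : rotBlock n 0 = 1 := by
  simp [rotBlock_eq_cos_smul_sub_sin_smul_J]

theorem rotBlock_add (s u : ℝ) : rotBlock n (s + u) = rotBlock n s * rotBlock n u := by
  simp only [rotBlock_eq_cos_smul_sub_sin_smul_J, Real.cos_add, Real.sin_add, sub_mul, mul_sub,
    one_mul, mul_one, smul_mul_assoc, mul_smul_comm, J_squared]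
  push_cast
  module

noncomputable def rotUnit (t : ℝ) : (Matrix (Fin n ⊕ Fin n) (Fin n ⊕ Fin n) ℂ)ˣ where
  val := rotBlock n t
  inv := rotBlock n (-t)
  val_inv := by rw [← rotBlock_add, add_neg_cancel, rotBlock_zero]
  inv_val := by rw [← rotBlock_add, neg_add_cancel, rotBlock_zero]

theorem rotBlock_inv (t : ℝ) : (rotBlock n t)⁻¹ = ↑(rotUnit n t)⁻¹ :=
  (coe_units_inv (rotUnit n t)).symm

theorem commute_J_rotUnit (t : ℝ) : Commute (J (Fin n) ℂ) (rotUnit n t) := by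
  change Commute _ (rotBlock n t)
  rw [rotBlock_eq_cos_smul_sub_sin_smul_J]
  exact ((Commute.one_right _).smul_right _).sub_right ((Commute.refl _).smul_right _)

theorem hasEntrywiseDerivAt_rotBlock (t : ℝ) :
    HasEntrywiseDerivAt (rotBlock n) (-J (Fin n) ℂ * rotBlock n t) t := by
  have hJX : -J (Fin n) ℂ * rotBlock n t
      = (-(Real.sin t : ℂ)) • 1 - (Real.cos t : ℂ) • J (Fin n) ℂ := by
    rw [rotBlock_eq_cos_smul_sub_sin_smul_J, neg_mul, mul_sub, mul_smul_comm, mul_smul_comm,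
      J_squared, mul_one]
    module
  rw [hJX]
  intro i j
  simp only [rotBlock_eq_cos_smul_sub_sin_smul_J, Matrix.sub_apply, Matrix.smul_apply,
    smul_eq_mul]
  have hcos := (Real.hasDerivAt_cos t).ofReal_comp
  rw [Complex.ofReal_neg] at hcos
  exact (hcos.mul_const _).fun_sub ((Real.hasDerivAt_sin t).ofReal_comp.mul_const _)

end Rotation

section UnitConj

variable {𝕜 𝔸 m : Type*} [NontriviallyNormedField 𝕜] [NormedRing 𝔸] [NormedAlgebra 𝕜 𝔸]
  [Fintype m] [DecidableEq m] {U : 𝕜 → (Matrix m m 𝔸)ˣ} {F : 𝕜 → Matrix m m 𝔸}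
  {S : 𝕜 → 𝕜 → Matrix m m 𝔸}
  (hS : ∀ t x, S t x = (U t : Matrix m m 𝔸) * F x * (↑(U t)⁻¹ : Matrix m m 𝔸))
include hS

theorem eq_commutator_of_hasEntrywiseDerivAt_unitConj {G St : Matrix m m 𝔸} {t x : 𝕜}
    (hU : HasEntrywiseDerivAt (fun s => (U s : Matrix m m 𝔸)) (G * U t) t)
    (hSt : HasEntrywiseDerivAt (fun s => S s x) St t) :
    St = G * S t x - S t x * G := by
  have hSU : (fun s => S s x * U s) = fun s => U s * F x :=
    funext fun s => by rw [hS, mul_assoc _ _ (U s : Matrix m m 𝔸), Units.inv_mul, mul_one]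
  have hderiv := hSt.mul hU
  rw [hSU] at hderiv
  rw [← Units.mul_left_inj (U t), sub_mul, mul_assoc G, congrFun hSU t, mul_assoc, ← mul_assoc G]
  exact eq_sub_of_add_eq (hderiv.unique (hU.mul_const (F x)))

theorem hasEntrywiseDerivAt_of_unitConj {Sx : Matrix m m 𝔸} {t x : 𝕜}
    (hSx : HasEntrywiseDerivAt (fun y => S t y) Sx x) :
    HasEntrywiseDerivAt F ((↑(U t)⁻¹ : Matrix m m 𝔸) * Sx * U t) x := by
  have hF : F = fun y => (↑(U t)⁻¹ : Matrix m m 𝔸) * S t y * (U t : Matrix m m 𝔸) :=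
    funext fun y => by simp [hS, mul_assoc]
  rw [hF]
  exact (hSx.const_mul _).mul_const _

end UnitConj

theorem trace_rot_conj_CS_integrand_eq_zero_general
    (n : ℕ) (A B : ℝ → Matrix (Fin n) (Fin n) ℂ)
    (hAi : ∀ x, A x * A x = A x) (hBi : ∀ x, B x * B x = B x)
    (S St Sx : ℝ → ℝ → Matrix (Fin n ⊕ Fin n) (Fin n ⊕ Fin n) ℂ)
    (hS : ∀ t x, S t x =
      rotBlock n t * Matrix.fromBlocks (A x) 0 0 (B x) * (rotBlock n t)⁻¹)
    (hSt : ∀ t x i j, HasDerivAt (fun s => S s x i j) (St t x i j) t)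
    (hSx : ∀ t x i j, HasDerivAt (fun y => S t y i j) (Sx t x i j) x) :
    ∀ (k : ℕ) (t x : ℝ),
      Matrix.trace ((1 - (2 : ℂ) • S t x) * St t x * (Sx t x) ^ (2 * k + 1)) = 0 := by
  intro k t x
  have hS' : ∀ t x, S t x = (rotUnit n t : Matrix _ _ ℂ) * fromBlocks (A x) 0 0 (B x) *
      (↑(rotUnit n t)⁻¹ : Matrix _ _ ℂ) :=
    fun t x => by rw [hS, rotBlock_inv]; rfl
  have hidem : ∀ y, S t y * S t y = S t y :=
    fun y => by rw [hS', ← sq, Units.conj_pow, sq, fromBlocks_multiply]; simp [hAi, hBi]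
  have hSt' : St t x = -J (Fin n) ℂ * S t x - S t x * -J (Fin n) ℂ :=
    eq_commutator_of_hasEntrywiseDerivAt_unitConj hS' (hasEntrywiseDerivAt_rotBlock n t) (hSt t x)
  obtain ⟨A', B', hFd⟩ :=
    (hasEntrywiseDerivAt_of_unitConj hS' (hSx t x)).exists_eq_fromBlocks_zero_zero
  have hSx' : Sx t x = (rotUnit n t : Matrix _ _ ℂ) * fromBlocks A' 0 0 B' *
      (↑(rotUnit n t)⁻¹ : Matrix _ _ ℂ) := by
    rw [← hFd]; simp [mul_assoc]
  have hodd :=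
    mul_pow_odd_add_pow_odd_mul (HasEntrywiseDerivAt.mul_add_mul_eq_of_mul_self (hSx t x) hidem) k
  rw [hSt', trace_one_sub_two_smul_mul_commutator_mul (hidem x) hodd, hSx', Units.conj_pow,
    trace_mul_units_conj_of_commute (commute_J_rotUnit n t).neg_left, neg_mul, trace_neg,
    trace_J_mul_fromBlocks_pow, neg_zero]

/-- For differentiable families of Hermitian projections `A, B`, `F(x) = diag(A x, B x)` and
`S(t,x) = X(t) * F(x) * X(t)⁻¹`, the trace
`Tr((1 - 2 S) (∂ₜ S) (∂ₓ S)^(2k+1))` vanishes identically. -/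
theorem trace_rot_conj_CS_integrand_eq_zero
    (n : ℕ) (A B : ℝ → Matrix (Fin n) (Fin n) ℂ)
    (hAh : ∀ x, (A x).IsHermitian) (hBh : ∀ x, (B x).IsHermitian)
    (hAi : ∀ x, A x * A x = A x) (hBi : ∀ x, B x * B x = B x)
    (hAd : ∀ x i j, DifferentiableAt ℝ (fun y => A y i j) x)
    (hBd : ∀ x i j, DifferentiableAt ℝ (fun y => B y i j) x)
    (S St Sx : ℝ → ℝ → Matrix (Fin n ⊕ Fin n) (Fin n ⊕ Fin n) ℂ)
    (hS : ∀ t x, S t x =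
      rotBlock n t * Matrix.fromBlocks (A x) 0 0 (B x) * (rotBlock n t)⁻¹)
    (hSt : ∀ t x i j, HasDerivAt (fun s => S s x i j) (St t x i j) t)
    (hSx : ∀ t x i j, HasDerivAt (fun y => S t y i j) (Sx t x i j) x) :
    ∀ (k : ℕ) (t x : ℝ),
      Matrix.trace ((1 - (2 : ℂ) • S t x) * St t x * (Sx t x) ^ (2 * k + 1)) = 0 :=
  trace_rot_conj_CS_integrand_eq_zero_general n A B hAi hBi S St Sx hS hSt hSx
end

section
/- With notation as above (A Hermitian idempotent, S(t) = X(t)·diag(A,Iₙ)·X(t)⁻¹·diag(Iₙ, Iₙ−A)), for each t the matrix S(t) is Hermitian and idempotent, and S(0) = diag(A, Iₙ−A) while S(π/2) = diag(Iₙ, 0). -/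
open Matrix

lemma rot_mul (n : ℕ) (t : ℝ) : rotBlock n t * rotBlock n (-t) = 1 := by
  have h : (Real.cos t : ℂ)^2 + (Real.sin t : ℂ)^2 = 1 := by
    exact_mod_cast congrArg (Complex.ofReal ·) (Real.cos_sq_add_sin_sq t)
  simp only [rotBlock, Real.cos_neg, Real.sin_neg, fromBlocks_multiply,
    Matrix.smul_mul, Matrix.mul_smul, one_mul, mul_one, smul_smul, ← fromBlocks_one,
    Complex.ofReal_neg, neg_neg, neg_mul, mul_neg, ← add_smul]
  rw [show (Real.cos t:ℂ) * Real.cos t + Real.sin t * Real.sin t = 1 by linear_combination h,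
    show -((Real.sin t:ℂ) * Real.cos t) + Real.cos t * Real.sin t = 0 by ring,
    show -((Real.cos t:ℂ) * Real.sin t) + Real.sin t * Real.cos t = 0 by ring,
    show (Real.sin t:ℂ) * Real.sin t + Real.cos t * Real.cos t = 1 by linear_combination h,
    one_smul, zero_smul]

lemma rot_inv (n : ℕ) (t : ℝ) : (rotBlock n t)⁻¹ = rotBlock n (-t) :=
  Matrix.inv_eq_right_inv (rot_mul n t)

lemma S_form (n : ℕ) (A : Matrix (Fin n) (Fin n) ℂ) (hAi : A * A = A) (t : ℝ) :
    rotBlock n t * Matrix.fromBlocks A 0 0 1 * (rotBlock n t)⁻¹ *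
      Matrix.fromBlocks 1 0 0 (1 - A) =
    Matrix.fromBlocks
      (((Real.cos t : ℂ) * Real.cos t) • A + ((Real.sin t : ℂ) * Real.sin t) • (1 : Matrix (Fin n) (Fin n) ℂ))
      (((Real.cos t : ℂ) * Real.sin t) • (1 - A))
      (((Real.cos t : ℂ) * Real.sin t) • (1 - A))
      (((Real.cos t : ℂ) * Real.cos t) • (1 - A)) := by
  rw [rot_inv]
  have h1A : (1 - A) * (1 - A) = 1 - A := by
    simp [sub_mul, mul_sub, hAi]
  simp only [rotBlock, Real.cos_neg, Real.sin_neg, fromBlocks_multiply,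
    Matrix.smul_mul, Matrix.mul_smul, one_mul, mul_one, smul_smul,
    Complex.ofReal_neg, neg_neg, neg_mul, mul_neg, neg_smul, smul_zero,
    Matrix.mul_zero, Matrix.zero_mul, add_zero, zero_add, smul_sub, smul_add]
  have hA0 : A * (1 - A) = 0 := by simp [mul_sub, hAi]
  simp only [add_mul, Matrix.neg_mul, Matrix.smul_mul, hA0, smul_zero, neg_zero,
    one_mul, add_zero, zero_add, neg_zero]
  rw [Matrix.fromBlocks_inj]
  refine ⟨rfl, ?_, ?_, ?_⟩ <;> module


/-- For a Hermitian projection `A`, the path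
`S(t) = X(t) · diag(A, 1) · X(t)⁻¹ · diag(1, 1 - A)` consists of Hermitian idempotents,
and `S(0) = diag(A, 1 - A)`, `S(π/2) = diag(1, 0)`. -/
theorem rot_conj_inverse_path_is_projection
    (n : ℕ) (A : Matrix (Fin n) (Fin n) ℂ)
    (hA : A.IsHermitian) (hAi : A * A = A) :
    (∀ t : ℝ,
      (rotBlock n t * Matrix.fromBlocks A 0 0 1 * (rotBlock n t)⁻¹ *
        Matrix.fromBlocks 1 0 0 (1 - A)).IsHermitian ∧
      (rotBlock n t * Matrix.fromBlocks A 0 0 1 * (rotBlock n t)⁻¹ *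
          Matrix.fromBlocks 1 0 0 (1 - A)) *
        (rotBlock n t * Matrix.fromBlocks A 0 0 1 * (rotBlock n t)⁻¹ *
          Matrix.fromBlocks 1 0 0 (1 - A)) =
        rotBlock n t * Matrix.fromBlocks A 0 0 1 * (rotBlock n t)⁻¹ *
          Matrix.fromBlocks 1 0 0 (1 - A)) ∧
    rotBlock n 0 * Matrix.fromBlocks A 0 0 1 * (rotBlock n 0)⁻¹ *
        Matrix.fromBlocks 1 0 0 (1 - A) = Matrix.fromBlocks A 0 0 (1 - A) ∧
    rotBlock n (Real.pi / 2) * Matrix.fromBlocks A 0 0 1 * (rotBlock n (Real.pi / 2))⁻¹ *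
        Matrix.fromBlocks 1 0 0 (1 - A) = Matrix.fromBlocks 1 0 0 0 := by
  have hA0 : A * (1 - A) = 0 := by simp [mul_sub, hAi]
  have h0A : (1 - A) * A = 0 := by simp [sub_mul, hAi]
  have h1A : (1 - A) * (1 - A) = 1 - A := by simp [sub_mul, mul_sub, hAi]
  refine ⟨fun t => ?_, ?_, ?_⟩
  · have h : (Real.cos t : ℂ)^2 + (Real.sin t : ℂ)^2 = 1 := by
      exact_mod_cast congrArg (Complex.ofReal ·) (Real.cos_sq_add_sin_sq t)
    have h2 : (Complex.cos t)^2 + (Complex.sin t)^2 = 1 := by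
      rw [← Complex.ofReal_cos, ← Complex.ofReal_sin]; exact h
    rw [S_form n A hAi t]
    constructor
    · rw [Matrix.isHermitian_fromBlocks_iff]
      refine ⟨?_, ?_, ?_, ?_⟩ <;>
        simp [Matrix.IsHermitian, Matrix.conjTranspose_smul, conjTranspose_sub,
          conjTranspose_one, hA.eq, ← Complex.ofReal_cos, ← Complex.ofReal_sin,
          ← Complex.ofReal_mul, Complex.conj_ofReal]
    · rw [Matrix.fromBlocks_multiply, Matrix.fromBlocks_inj]
      simp only [Matrix.add_mul, Matrix.mul_add, Matrix.smul_mul, Matrix.mul_smul,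
        hAi, hA0, h0A, h1A, smul_smul, smul_zero, add_zero, zero_add, one_mul, mul_one]
      refine ⟨?_, ?_, ?_, ?_⟩ <;> match_scalars <;> ring_nf <;>
        first
        | linear_combination (Complex.cos (t:ℂ))^2 * h2
        | linear_combination (-(Complex.cos (t:ℂ))^2) * h2
        | linear_combination (Complex.sin (t:ℂ))^2 * h2
        | linear_combination (-(Complex.sin (t:ℂ))^2) * h2
        | linear_combination (Complex.cos (t:ℂ) * Complex.sin (t:ℂ)) * h2
        | linear_combination (-(Complex.cos (t:ℂ) * Complex.sin (t:ℂ))) * h2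
  · rw [S_form n A hAi 0]; simp
  · rw [S_form n A hAi (Real.pi/2)]; simp
end

section
/- Let A be an n×n Hermitian idempotent matrix, A^⊥ = Iₙ − A, and S(t) the path S(t) = [[A + sin²(t)·A^⊥, cos(t)sin(t)·A^⊥], [cos(t)sin(t)·A^⊥, cos²(t)·A^⊥]], with S′ its t-derivative. Then for any n×n matrix V, setting DS(t) = [[cos²(t)·V, −cos(t)sin(t)·V], [−cos(t)sin(t)·V, −cos²(t)·V]], one has Tr( (I₂ₙ − 2S(t)) · S′(t) · DS(t)^{2k+1} ) = 0 for every k ≥ 0 and all t ∈ ℝ. -/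
open Matrix

/-- The explicit path `S(t)` joining `A ⊕ A^⊥` to `diag(1,0)`. -/
noncomputable def invPath (n : ℕ) (A : Matrix (Fin n) (Fin n) ℂ) (t : ℝ) :
    Matrix (Fin n ⊕ Fin n) (Fin n ⊕ Fin n) ℂ :=
  Matrix.fromBlocks
    (A + ((Real.sin t : ℂ) ^ 2) • (1 - A))
    (((Real.cos t : ℂ) * (Real.sin t : ℂ)) • (1 - A))
    (((Real.cos t : ℂ) * (Real.sin t : ℂ)) • (1 - A))
    (((Real.cos t : ℂ) ^ 2) • (1 - A))

/-- The `t`-derivative of `invPath`. -/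
noncomputable def invPathDeriv (n : ℕ) (A : Matrix (Fin n) (Fin n) ℂ) (t : ℝ) :
    Matrix (Fin n ⊕ Fin n) (Fin n ⊕ Fin n) ℂ :=
  Matrix.fromBlocks
    ((2 * (Real.cos t : ℂ) * (Real.sin t : ℂ)) • (1 - A))
    (((Real.cos t : ℂ) ^ 2 - (Real.sin t : ℂ) ^ 2) • (1 - A))
    (((Real.cos t : ℂ) ^ 2 - (Real.sin t : ℂ) ^ 2) • (1 - A))
    ((-(2 * (Real.cos t : ℂ) * (Real.sin t : ℂ))) • (1 - A))

/-- The matrix-valued coefficient `dS(t)` applied to a direction `V`. -/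
noncomputable def invPathDir (n : ℕ) (V : Matrix (Fin n) (Fin n) ℂ) (t : ℝ) :
    Matrix (Fin n ⊕ Fin n) (Fin n ⊕ Fin n) ℂ :=
  Matrix.fromBlocks
    (((Real.cos t : ℂ) ^ 2) • V)
    ((-((Real.cos t : ℂ) * (Real.sin t : ℂ))) • V)
    ((-((Real.cos t : ℂ) * (Real.sin t : ℂ))) • V)
    ((-((Real.cos t : ℂ) ^ 2)) • V)

/-! ### Auxiliary lemmas -/

private lemma trace_fromBlocks' {n : ℕ} (A B C D : Matrix (Fin n) (Fin n) ℂ) :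
    Matrix.trace (Matrix.fromBlocks A B C D) = Matrix.trace A + Matrix.trace D := by
  simp [Matrix.trace, Fintype.sum_sum_type, Matrix.fromBlocks, Matrix.diag]

/-- Abbreviation for the block pattern of `invPathDir`. -/
private def dirM {n : ℕ} (c s : ℂ) (W : Matrix (Fin n) (Fin n) ℂ) :
    Matrix (Fin n ⊕ Fin n) (Fin n ⊕ Fin n) ℂ :=
  Matrix.fromBlocks (c ^ 2 • W) ((-(c * s)) • W) ((-(c * s)) • W) ((-(c ^ 2)) • W)

private lemma dir_mul_dir {n : ℕ} (V W : Matrix (Fin n) (Fin n) ℂ) (c s : ℂ)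
    (h : c ^ 2 + s ^ 2 = 1) :
    dirM c s V * dirM c s W = (c ^ 2) • Matrix.fromBlocks (V * W) 0 0 (V * W) := by
  unfold dirM
  rw [Matrix.fromBlocks_multiply, Matrix.fromBlocks_smul, Matrix.fromBlocks_inj]
  refine ⟨?_, ?_, ?_, ?_⟩
  all_goals simp only [Matrix.smul_mul, Matrix.mul_smul, smul_smul, smul_zero]
  all_goals match_scalars
  all_goals (first | ring1 | linear_combination (c ^ 2) * h)

private lemma dir_mul_blockDiag {n : ℕ} (W U : Matrix (Fin n) (Fin n) ℂ) (c s : ℂ) :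
    dirM c s W * Matrix.fromBlocks U 0 0 U = dirM c s (W * U) := by
  unfold dirM
  rw [Matrix.fromBlocks_multiply]
  simp [Matrix.smul_mul]

private lemma dir_pow_odd {n : ℕ} (V : Matrix (Fin n) (Fin n) ℂ) (c s : ℂ)
    (h : c ^ 2 + s ^ 2 = 1) (k : ℕ) :
    (dirM c s V) ^ (2 * k + 1) = ((c ^ 2) ^ k) • dirM c s (V ^ (2 * k + 1)) := by
  induction k with
  | zero => simp
  | succ k ih =>
    have h1 : 2 * (k + 1) + 1 = (2 * k + 1) + 2 := by ring
    rw [h1, pow_add, ih, pow_two (dirM c s V), dir_mul_dir V V c s h, smul_mul_assoc, mul_smul_comm,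
      dir_mul_blockDiag, smul_smul, ← pow_succ]
    congr 2
    rw [← pow_two, ← pow_add]

private lemma key_prod {n : ℕ} (A Q : Matrix (Fin n) (Fin n) ℂ)
    (hQ : Q * Q = Q) (hAQ : A * Q = 0)
    (c s : ℂ) (h : c ^ 2 + s ^ 2 = 1) :
    ((1 : Matrix (Fin n ⊕ Fin n) (Fin n ⊕ Fin n) ℂ) -
      (2 : ℂ) • Matrix.fromBlocks (A + s ^ 2 • Q) ((c * s) • Q)
        ((c * s) • Q) (c ^ 2 • Q)) *
    Matrix.fromBlocks ((2 * c * s) • Q) ((c ^ 2 - s ^ 2) • Q)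
      ((c ^ 2 - s ^ 2) • Q) ((-(2 * c * s)) • Q) =
    Matrix.fromBlocks 0 Q (-Q) 0 := by
  rw [← Matrix.fromBlocks_one, sub_eq_add_neg, Matrix.fromBlocks_smul, Matrix.fromBlocks_neg,
    Matrix.fromBlocks_add, Matrix.fromBlocks_multiply, Matrix.fromBlocks_inj]
  refine ⟨?_, ?_, ?_, ?_⟩
  all_goals simp only [Matrix.smul_mul, Matrix.mul_smul, smul_smul, smul_zero, zero_mul,
    Matrix.zero_mul, Matrix.mul_zero, add_mul, Matrix.add_mul, Matrix.mul_add, neg_mul,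
    Matrix.neg_mul, Matrix.mul_neg, one_mul, Matrix.one_mul, smul_add, smul_neg,
    hQ, hAQ, neg_zero, add_zero, zero_add, neg_smul]
  all_goals match_scalars
  all_goals (first
    | ring1
    | linear_combination (2 * c * s) * h
    | linear_combination (-(2 * c * s)) * h
    | linear_combination (1 + 2 * s ^ 2) * h
    | linear_combination (-(1 + 2 * s ^ 2)) * h
    | linear_combination (2 * c ^ 2 + 1) * h
    | linear_combination (-(2 * c ^ 2 + 1)) * h)

private lemma trace_key {n : ℕ} (Q W : Matrix (Fin n) (Fin n) ℂ) (c s : ℂ) :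
    Matrix.trace (Matrix.fromBlocks 0 Q (-Q) 0 * dirM c s W) = 0 := by
  unfold dirM
  rw [Matrix.fromBlocks_multiply, trace_fromBlocks']
  simp only [Matrix.zero_mul, Matrix.neg_mul, Matrix.mul_smul, zero_add, add_zero,
    Matrix.trace_smul, Matrix.trace_neg, smul_neg, neg_neg]
  simp [smul_eq_mul]

/-- The Chern–Simons trace integrand of the path joining `A ⊕ A^⊥` to `diag(1,0)` vanishes:
`Tr((1 - 2 S(t)) S'(t) (DS(t))^(2k+1)) = 0` for every `k`, `t`, and every direction `V`. -/
theorem trace_invPath_CS_integrand_eq_zero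
    (n : ℕ) (A : Matrix (Fin n) (Fin n) ℂ)
    (hA : A.IsHermitian) (hAi : A * A = A) :
    ∀ (k : ℕ) (t : ℝ) (V : Matrix (Fin n) (Fin n) ℂ),
      Matrix.trace ((1 - (2 : ℂ) • invPath n A t) * invPathDeriv n A t *
        (invPathDir n V t) ^ (2 * k + 1)) = 0 := by
  intro k t V
  have h : (Real.cos t : ℂ) ^ 2 + (Real.sin t : ℂ) ^ 2 = 1 := by
    norm_cast
    exact_mod_cast Real.cos_sq_add_sin_sq t
  have hQ : (1 - A) * (1 - A) = 1 - A := by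
    simp [mul_sub, sub_mul, hAi]
  have hAQ : A * (1 - A) = 0 := by
    simp [mul_sub, hAi]
  have hdir : invPathDir n V t = dirM (Real.cos t : ℂ) (Real.sin t : ℂ) V := rfl
  have hmain : (1 - (2 : ℂ) • invPath n A t) * invPathDeriv n A t =
      Matrix.fromBlocks 0 (1 - A) (-(1 - A)) 0 :=
    key_prod A (1 - A) hQ hAQ _ _ h
  rw [hmain, hdir, dir_pow_odd V _ _ h k, Matrix.mul_smul, Matrix.trace_smul,
    trace_key, smul_zero]
end
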